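/- arXiv:2105.04469 — 4 statements merged into one kernel-verified Lean document; each statement's English description precedes it below -/
import Mathlib

section
/- Let A be a unital C*-algebra, let τ : A → ℂ be a positive tracial linear functional, let a ∈ A be self-adjoint and let b ∈ A satisfy 0 ≤ b. Then τ(((a−b)₊)²) ≤ τ(a²); equivalently, the tracial 2-seminorm satisfies ‖(a−b)₊‖_{2,τ} ≤ ‖a‖_{2,τ}. (Both τ(((a−b)₊)²) and τ(a²) are nonnegative real numbers.) -/
/-!
Write `p = (a - b)₊`. Since `p (a - b)₋ = 0` we have `p (a - b) = p²`, hence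
`τ(p a) = τ(p²) + τ(p b) ≥ τ(p²)`, the trace of a product of two positive elements being
nonnegative. Expanding `0 ≤ τ((p - a)²)` with the trace property gives
`τ(a²) ≥ 2 τ(p a) - τ(p²) ≥ τ(p²)`.
-/

open scoped ComplexOrder

namespace CFC

variable {A : Type*} [NonUnitalRing A] [Module ℝ A] [SMulCommClass ℝ A A] [IsScalarTower ℝ A A]
  [StarRing A] [TopologicalSpace A] [NonUnitalContinuousFunctionalCalculus ℝ A IsSelfAdjoint]

lemma posPart_mul_of_isSelfAdjoint {a : A} (ha : IsSelfAdjoint a) : a⁺ * a = a⁺ * a⁺ := by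
  nth_rw 2 [← posPart_sub_negPart a ha]
  rw [mul_sub, posPart_mul_negPart, sub_zero]

end CFC

lemma LinearMap.map_sub_sq_of_tracial {R : Type*} [Ring R] [Module ℂ R] (τ : R →ₗ[ℂ] ℂ)
    (htracial : ∀ x y : R, τ (x * y) = τ (y * x)) (x y : R) :
    τ ((x - y) ^ 2) = τ (x ^ 2) - 2 * τ (x * y) + τ (y ^ 2) := by
  have hexpand : (x - y) ^ 2 = x ^ 2 - x * y - y * x + y ^ 2 := by noncomm_ring
  rw [hexpand, map_add, map_sub, map_sub, htracial y x]
  ring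

lemma LinearMap.map_sq_nonneg_of_isSelfAdjoint {R : Type*} [Ring R] [StarRing R] [Module ℂ R]
    (τ : R →ₗ[ℂ] ℂ) (hpos : ∀ x : R, 0 ≤ τ (star x * x)) {x : R} (hx : IsSelfAdjoint x) :
    0 ≤ τ (x ^ 2) := by
  simpa only [hx.star_eq, sq] using hpos x

lemma LinearMap.map_mul_nonneg_of_tracial {A : Type*} [NonUnitalCStarAlgebra A] [PartialOrder A]
    [StarOrderedRing A] (τ : A →ₗ[ℂ] ℂ) (hpos : ∀ x : A, 0 ≤ τ (star x * x))
    (htracial : ∀ x y : A, τ (x * y) = τ (y * x)) {p q : A} (hp : 0 ≤ p) (hq : 0 ≤ q) :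
    0 ≤ τ (p * q) := by
  obtain ⟨s, rfl⟩ := CStarAlgebra.nonneg_iff_eq_star_mul_self.mp hp
  obtain ⟨t, rfl⟩ := CStarAlgebra.nonneg_iff_eq_star_mul_self.mp hq
  have hcyclic : τ (star s * s * (star t * t)) = τ (star (s * star t) * (s * star t)) := by
    rw [← mul_assoc, htracial, star_mul, star_star]
    simp only [mul_assoc]
  exact hcyclic ▸ hpos _

/-- Let `A` be a unital C*-algebra, `τ : A → ℂ` a positive tracial linear
functional, `a ∈ A` self-adjoint and `0 ≤ b`.  Then `τ(((a−b)₊)²) ≤ τ(a²)`; both quantities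
are nonnegative real numbers (nonnegativity and the inequality are expressed via the partial
order on `ℂ`, in which `0 ≤ z` iff `z` is a nonnegative real). -/
theorem tracial_posPart_sq_le {A : Type*} [CStarAlgebra A] [PartialOrder A] [StarOrderedRing A]
    (τ : A →ₗ[ℂ] ℂ)
    (hpos : ∀ x : A, 0 ≤ τ (star x * x))
    (htracial : ∀ x y : A, τ (x * y) = τ (y * x))
    (a b : A) (ha : IsSelfAdjoint a) (hb : 0 ≤ b) :
    0 ≤ τ ((a - b)⁺ ^ 2) ∧ τ ((a - b)⁺ ^ 2) ≤ τ (a ^ 2) := by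
  set p := (a - b)⁺
  have hp : 0 ≤ p := CFC.posPart_nonneg _
  have hpa : τ (p * a) = τ (p ^ 2) + τ (p * b) := by
    have hsplit : p * a = p * (a - b) + p * b := by noncomm_ring
    rw [hsplit, CFC.posPart_mul_of_isSelfAdjoint (ha.sub (.of_nonneg hb)), map_add, sq]
  have hsq := τ.map_sub_sq_of_tracial htracial p a
  refine ⟨τ.map_sq_nonneg_of_isSelfAdjoint hpos (.of_nonneg hp), ?_⟩
  have hdecomp : τ (a ^ 2) = τ (p ^ 2) + (τ ((p - a) ^ 2) + 2 * τ (p * b)) := by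
    linear_combination 2 * hpa - hsq
  rw [hdecomp]
  refine le_add_of_nonneg_right (add_nonneg ?_ (mul_nonneg zero_le_two ?_))
  · exact τ.map_sq_nonneg_of_isSelfAdjoint hpos ((IsSelfAdjoint.of_nonneg hp).sub ha)
  · exact τ.map_mul_nonneg_of_tracial hpos htracial hp hb
end

section
/- Let A be a unital C*-algebra, let τ : A → ℂ be a positive tracial linear functional, let a ∈ A be self-adjoint and let b ∈ A satisfy 0 ≤ b. Then τ(((a−b)₋)² + b² + b(a−b) + (a−b)b) is a nonnegative real number. -/
/-!
Write `c = a - b = c⁺ - c⁻`. Then the expression equals `(b - c⁻)² + b c⁺ + c⁺ b`, where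
`b - c⁻` is self-adjoint, so each summand has the form `star x * x` or is a product of two
positive elements, and a positive tracial functional is nonnegative on both.
-/

open scoped ComplexOrder

section Trace

variable {A : Type*} [NonUnitalCStarAlgebra A] [PartialOrder A] [StarOrderedRing A]
  {τ : A →ₗ[ℂ] ℂ}

/-- Writing `x = star s * s` and `y = star t * t`, traciality turns `τ (x * y)` into
`τ (star (s * star t) * (s * star t))`. -/
theorem tracial_mul_nonneg_of_nonneg (hpos : ∀ x : A, 0 ≤ τ (star x * x))
    (htracial : ∀ x y : A, τ (x * y) = τ (y * x)) {x y : A} (hx : 0 ≤ x) (hy : 0 ≤ y) :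
    0 ≤ τ (x * y) := by
  obtain ⟨s, rfl⟩ := CStarAlgebra.nonneg_iff_eq_star_mul_self.mp hx
  obtain ⟨t, rfl⟩ := CStarAlgebra.nonneg_iff_eq_star_mul_self.mp hy
  calc 0 ≤ τ (star (s * star t) * (s * star t)) := hpos _
    _ = τ (t * (star s * s * star t)) := by simp only [star_mul, star_star, mul_assoc]
    _ = τ (star s * s * (star t * t)) := by rw [← htracial, mul_assoc]

end Trace

/-- Let `A` be a unital C*-algebra, `τ : A → ℂ` a positive tracial linear
functional, `a ∈ A` self-adjoint and `0 ≤ b`.  Then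
`τ(((a−b)₋)² + b² + b(a−b) + (a−b)b)` is a nonnegative real number (expressed via the
partial order on `ℂ`, in which `0 ≤ z` iff `z` is a nonnegative real number). -/
theorem tracial_negPart_expression_nonneg {A : Type*} [CStarAlgebra A]
    [PartialOrder A] [StarOrderedRing A]
    (τ : A →ₗ[ℂ] ℂ)
    (hpos : ∀ x : A, 0 ≤ τ (star x * x))
    (htracial : ∀ x y : A, τ (x * y) = τ (y * x))
    (a b : A) (ha : IsSelfAdjoint a) (hb : 0 ≤ b) :
    0 ≤ τ ((a - b)⁻ ^ 2 + b ^ 2 + b * (a - b) + (a - b) * b) := by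
  set c := a - b
  have hc : c⁺ - c⁻ = c := CFC.posPart_sub_negPart c (ha.sub hb.isSelfAdjoint)
  have hd : IsSelfAdjoint (b - c⁻) := hb.isSelfAdjoint.sub (CFC.negPart_nonneg c).isSelfAdjoint
  have hsum : c⁻ ^ 2 + b ^ 2 + b * c + c * b
      = star (b - c⁻) * (b - c⁻) + b * c⁺ + c⁺ * b := by
    have h : c⁻ ^ 2 + b ^ 2 + b * (c⁺ - c⁻) + (c⁺ - c⁻) * b
        = (b - c⁻) * (b - c⁻) + b * c⁺ + c⁺ * b := by noncomm_ring
    rw [hd.star_eq, ← h, hc]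
  rw [hsum, map_add, map_add]
  have hbp := tracial_mul_nonneg_of_nonneg hpos htracial hb (CFC.posPart_nonneg c)
  have hpb := tracial_mul_nonneg_of_nonneg hpos htracial (CFC.posPart_nonneg c) hb
  exact add_nonneg (add_nonneg (hpos _) hbp) hpb
end

section
/- Fix n ≥ 1. There exists an injective unital star-algebra homomorphism ι from M_n(ℂ) into the continuous functions C([0,1], Matrix (Fin n × Fin n) (Fin n × Fin n) ℂ) (with pointwise operations) such that: (1) ι(x)(0) = x ⊗ₖ 1 for every x ∈ M_n(ℂ); (2) ι(x)(1) = 1 ⊗ₖ x for every x ∈ M_n(ℂ); and (3) for every unitary v ∈ M_n(ℂ), every x ∈ M_n(ℂ) and every t ∈ [0,1], one has ι(v x v*)(t) = (v ⊗ₖ v) · ι(x)(t) · (v ⊗ₖ v)*. In other words, for every unitary representation ν of a group the map x ↦ (t ↦ exp(t·i·a)(x ⊗ₖ 1)exp(t·i·a)*), where a is self-adjoint with exp(i·a) equal to the flip unitary, gives a unital embedding of M_n(ℂ) into the join M_n(ℂ) ⋆ M_n(ℂ) intertwining Ad(ν) with Ad(ν ⊗ ν). -/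
/-!
Let `F` be the flip of `ℂⁿ ⊗ ℂⁿ` and `p = (1 - F) / 2` the projection onto the antisymmetric
tensors. Then `U t = (1 - p) + e^{iπt} p = exp (iπt p)` is a continuous path of unitaries from `1`
to `F`, and each `U t` commutes with every `v ⊗ v` because `F` does. Conjugating `x ⊗ 1` by `U t`
gives `ι`: at `t = 1` it is `F (x ⊗ 1) F = 1 ⊗ x`, and injectivity is read off at `t = 0`.
-/

open Matrix
open scoped Kronecker

namespace Matrix

theorem kronecker_one_injective {l m n R : Type*} [DecidableEq n] [MulZeroOneClass R]
    [Nonempty n] : Function.Injective fun x : Matrix l m R => x ⊗ₖ (1 : Matrix n n R) := by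
  intro x y hxy
  obtain ⟨j⟩ := ‹Nonempty n›
  ext i k
  simpa using congrFun₂ hxy (i, j) (k, j)

variable {m R : Type*} [DecidableEq m]

def tensorFlip (m R : Type*) [DecidableEq m] [Zero R] [One R] : Matrix (m × m) (m × m) R :=
  Equiv.Perm.permMatrix R (Equiv.prodComm m m)

theorem isSelfAdjoint_tensorFlip [NonAssocSemiring R] [StarRing R] :
    IsSelfAdjoint (tensorFlip m R) := by
  rw [IsSelfAdjoint, star_eq_conjTranspose, tensorFlip, conjTranspose_permMatrix]
  rfl

variable [Fintype m]

theorem tensorFlip_mul_self [NonAssocSemiring R] :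
    tensorFlip m R * tensorFlip m R = 1 := by
  rw [tensorFlip, ← permMatrix_mul,
    show (Equiv.prodComm m m : Equiv.Perm (m × m)) * Equiv.prodComm m m = 1 from
      Equiv.ext fun _ => rfl,
    permMatrix_one]

theorem tensorFlip_mul_kronecker [CommSemiring R] (a b : Matrix m m R) :
    tensorFlip m R * (a ⊗ₖ b) = (b ⊗ₖ a) * tensorFlip m R := by
  rw [tensorFlip, PEquiv.toMatrix_toPEquiv_mul, PEquiv.mul_toMatrix_toPEquiv]
  ext p q
  simp [mul_comm]

def kroneckerOneStarAlgHom (n R : Type*) [Fintype n] [DecidableEq n] [CommSemiring R]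
    [StarRing R] : Matrix m m R →⋆ₐ[R] Matrix (m × n) (m × n) R where
  toFun x := x ⊗ₖ 1
  map_one' := one_kronecker_one
  map_mul' x y := by rw [← mul_kronecker_mul, mul_one]
  map_zero' := zero_kronecker _
  map_add' x y := add_kronecker _ _ _
  commutes' r := by simp [algebraMap_eq_diagonal, ← diagonal_one, diagonal_kronecker_diagonal]
  map_star' x := by simp [star_eq_conjTranspose, conjTranspose_kronecker]

theorem mul_mul_star_kronecker_one [CommSemiring R] [StarRing R] {v : Matrix m m R}
    (hv : v ∈ unitary (Matrix m m R)) (x : Matrix m m R) :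
    (v * x * star v) ⊗ₖ (1 : Matrix m m R) = (v ⊗ₖ v) * (x ⊗ₖ 1) * star (v ⊗ₖ v) := by
  rw [show star (v ⊗ₖ v) = star v ⊗ₖ star v from conjTranspose_kronecker v v,
    ← mul_kronecker_mul, ← mul_kronecker_mul, mul_one, Unitary.mul_star_self_of_mem hv]

end Matrix

section ProjectionPath

open Complex

theorem Complex.exp_ofReal_mul_I_mem_unitary (x : ℝ) : exp (x * I) ∈ unitary ℂ := by
  rw [Unitary.mem_iff_star_mul_self, RCLike.star_def, ← exp_conj, ← exp_add]
  simp

variable {A : Type*} [Ring A] [Algebra ℂ A]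

noncomputable def projectionPath (p : A) (t : ℝ) : A :=
  1 - p + exp (↑(Real.pi * t) * I) • p

theorem projectionPath_zero (p : A) : projectionPath p 0 = 1 := by
  simp [projectionPath]

theorem projectionPath_one (p : A) : projectionPath p 1 = 1 - (2 : ℂ) • p := by
  simp only [projectionPath, mul_one, exp_pi_mul_I, neg_smul, one_smul, two_smul]
  abel

theorem Commute.projectionPath_left {p w : A} (h : Commute p w) (t : ℝ) :
    Commute (projectionPath p t) w :=
  ((Commute.one_left w).sub_left h).add_left (h.smul_left _)

theorem continuous_projectionPath [TopologicalSpace A] [IsTopologicalRing A] [ContinuousSMul ℂ A]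
    (p : A) : Continuous (projectionPath p) := by
  unfold projectionPath
  fun_prop

variable [StarRing A] [StarModule ℂ A]

theorem IsStarProjection.one_sub_add_smul_mem_unitary {p : A} (hp : IsStarProjection p) {c : ℂ}
    (hc : c ∈ unitary ℂ) : 1 - p + c • p ∈ unitary A := by
  have hpp : p * p = p := hp.isIdempotentElem.eq
  have hstar : star (1 - p + c • p) = 1 - p + star c • p := by
    simp [hp.isSelfAdjoint.star_eq]
  rw [Unitary.mem_iff, hstar]
  constructor
  · simp only [add_mul, mul_add, sub_mul, mul_sub, smul_mul_assoc, mul_smul_comm, one_mul,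
      mul_one, hpp, sub_self, zero_add, smul_smul, Unitary.mul_star_self_of_mem hc, one_smul]
    abel
  · simp only [add_mul, mul_add, sub_mul, mul_sub, smul_mul_assoc, mul_smul_comm, one_mul,
      mul_one, hpp, sub_self, zero_add, smul_smul, Unitary.star_mul_self_of_mem hc, one_smul]
    abel

theorem IsStarProjection.projectionPath_mem_unitary {p : A} (hp : IsStarProjection p) (t : ℝ) :
    projectionPath p t ∈ unitary A :=
  hp.one_sub_add_smul_mem_unitary (Complex.exp_ofReal_mul_I_mem_unitary _)

theorem IsSelfAdjoint.isStarProjection_half_smul_one_sub {F : A} (hF : IsSelfAdjoint F)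
    (hFF : F * F = 1) : IsStarProjection ((2⁻¹ : ℂ) • (1 - F)) where
  isIdempotentElem := by
    simp only [IsIdempotentElem, smul_mul_smul_comm, sub_mul, mul_sub, one_mul, mul_one, hFF]
    module
  isSelfAdjoint := by
    simp [IsSelfAdjoint, hF.star_eq]

end ProjectionPath

def StarAlgHom.ofContinuousFamily {X R A B : Type*} [TopologicalSpace X] [CommSemiring R]
    [Semiring A] [Algebra R A] [Star A] [Semiring B] [Algebra R B] [Star B] [TopologicalSpace B]
    [IsTopologicalSemiring B] [ContinuousStar B]
    (φ : X → A →⋆ₐ[R] B) (hφ : ∀ a, Continuous fun x => φ x a) : A →⋆ₐ[R] C(X, B) where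
  toFun a := ⟨fun x => φ x a, hφ a⟩
  map_one' := by ext; simp
  map_mul' a b := by ext; simp
  map_zero' := by ext; simp
  map_add' a b := by ext; simp
  commutes' r := by ext; simp [Algebra.algebraMap_eq_smul_one]
  map_star' a := by ext; exact map_star (φ _) a

theorem Commute.conj_conj {M : Type*} [Monoid M] [StarMul M] {u w : M} (h : Commute u w) (x : M) :
    u * (w * x * star w) * star u = w * (u * x * star u) * star w := by
  have h' : star w * star u = star u * star w := by rw [← star_mul, ← star_mul, h.eq]
  calc u * (w * x * star w) * star u = u * w * x * (star w * star u) := by simp only [mul_assoc]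
    _ = w * u * x * (star u * star w) := by rw [h.eq, h']
    _ = w * (u * x * star u) * star w := by simp only [mul_assoc]

section JoinEmbedding

variable (m : Type*) [Fintype m] [DecidableEq m]

noncomputable def flipPath : ℝ → Matrix (m × m) (m × m) ℂ :=
  projectionPath ((2⁻¹ : ℂ) • (1 - tensorFlip m ℂ))

theorem flipPath_mem_unitary (t : ℝ) : flipPath m t ∈ unitary (Matrix (m × m) (m × m) ℂ) :=
  (isSelfAdjoint_tensorFlip.isStarProjection_half_smul_one_sub
    tensorFlip_mul_self).projectionPath_mem_unitary t

theorem flipPath_zero : flipPath m 0 = 1 :=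
  projectionPath_zero _

theorem flipPath_one : flipPath m 1 = tensorFlip m ℂ := by
  rw [flipPath, projectionPath_one, smul_smul]
  norm_num

theorem continuous_flipPath : Continuous (flipPath m) :=
  continuous_projectionPath _

variable {m}

theorem commute_flipPath_kronecker_self (v : Matrix m m ℂ) (t : ℝ) :
    Commute (flipPath m t) (v ⊗ₖ v) :=
  (((Commute.one_left _).sub_left (tensorFlip_mul_kronecker v v)).smul_left _).projectionPath_left t

variable (m)

noncomputable def joinEmbedding :
    Matrix m m ℂ →⋆ₐ[ℂ] C(Set.Icc (0 : ℝ) 1, Matrix (m × m) (m × m) ℂ) :=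
  StarAlgHom.ofContinuousFamily
    (fun t => (Unitary.conjStarAlgAut ℂ _ ⟨flipPath m t, flipPath_mem_unitary m t⟩).toStarAlgHom.comp
      (kroneckerOneStarAlgHom m ℂ))
    fun x => by
      have hU : Continuous fun t : Set.Icc (0 : ℝ) 1 => flipPath m t :=
        (continuous_flipPath m).comp continuous_subtype_val
      exact (hU.mul continuous_const).mul hU.star

variable {m}

theorem joinEmbedding_apply (x : Matrix m m ℂ) (t : Set.Icc (0 : ℝ) 1) :
    joinEmbedding m x t = flipPath m t * (x ⊗ₖ 1) * star (flipPath m t) :=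
  rfl

theorem joinEmbedding_injective [Nonempty m] : Function.Injective (joinEmbedding m) := by
  intro x y hxy
  have h0 := ContinuousMap.congr_fun hxy ⟨0, Set.left_mem_Icc.mpr zero_le_one⟩
  simp only [joinEmbedding_apply, flipPath_zero, star_one, one_mul, mul_one] at h0
  exact kronecker_one_injective h0

theorem joinEmbedding_apply_zero (x : Matrix m m ℂ) :
    joinEmbedding m x ⟨0, Set.left_mem_Icc.mpr zero_le_one⟩ = x ⊗ₖ 1 := by
  simp [joinEmbedding_apply, flipPath_zero]

theorem joinEmbedding_apply_one (x : Matrix m m ℂ) :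
    joinEmbedding m x ⟨1, Set.right_mem_Icc.mpr zero_le_one⟩ = 1 ⊗ₖ x := by
  rw [joinEmbedding_apply, flipPath_one, isSelfAdjoint_tensorFlip.star_eq,
    tensorFlip_mul_kronecker, mul_assoc, tensorFlip_mul_self, mul_one]

theorem joinEmbedding_conj {v : Matrix m m ℂ} (hv : v ∈ unitary (Matrix m m ℂ))
    (x : Matrix m m ℂ) (t : Set.Icc (0 : ℝ) 1) :
    joinEmbedding m (v * x * star v) t = (v ⊗ₖ v) * joinEmbedding m x t * star (v ⊗ₖ v) := by
  rw [joinEmbedding_apply, joinEmbedding_apply, mul_mul_star_kronecker_one hv,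
    (commute_flipPath_kronecker_self v t).conj_conj]

end JoinEmbedding

/-- For `n ≥ 1` there is an injective unital star-algebra homomorphism
`ι : Mₙ(ℂ) → C([0,1], Mₙ(ℂ) ⊗ Mₙ(ℂ))` with `ι(x)(0) = x ⊗ₖ 1`, `ι(x)(1) = 1 ⊗ₖ x`, and
`ι(v x v*)(t) = (v ⊗ₖ v) ι(x)(t) (v ⊗ₖ v)*` for every unitary `v ∈ Mₙ(ℂ)`.  In
particular `ι` is a unital embedding of `Mₙ(ℂ)` into the join `Mₙ(ℂ) ⋆ Mₙ(ℂ)`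
intertwining `Ad(ν)` with `Ad(ν ⊗ ν)` for every unitary representation `ν`. -/
theorem embedding_into_join (n : ℕ) (hn : 1 ≤ n) :
    ∃ ι : Matrix (Fin n) (Fin n) ℂ →⋆ₐ[ℂ]
        C(Set.Icc (0 : ℝ) 1, Matrix (Fin n × Fin n) (Fin n × Fin n) ℂ),
      Function.Injective ι ∧
      (∀ x : Matrix (Fin n) (Fin n) ℂ,
        ι x ⟨0, Set.left_mem_Icc.mpr zero_le_one⟩ = x ⊗ₖ (1 : Matrix (Fin n) (Fin n) ℂ)) ∧
      (∀ x : Matrix (Fin n) (Fin n) ℂ,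
        ι x ⟨1, Set.right_mem_Icc.mpr zero_le_one⟩ = (1 : Matrix (Fin n) (Fin n) ℂ) ⊗ₖ x) ∧
      (∀ v ∈ unitary (Matrix (Fin n) (Fin n) ℂ), ∀ x : Matrix (Fin n) (Fin n) ℂ,
        ∀ t : Set.Icc (0 : ℝ) 1,
          ι (v * x * star v) t = (v ⊗ₖ v) * ι x t * star (v ⊗ₖ v)) := by
  have : Nonempty (Fin n) := ⟨⟨0, hn⟩⟩
  exact ⟨joinEmbedding (Fin n), joinEmbedding_injective, joinEmbedding_apply_zero,
    joinEmbedding_apply_one, fun _ hv => joinEmbedding_conj hv⟩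
end

section
/- Let G be a finite group, let B be a unital C*-algebra with an action β of G on B by star-algebra automorphisms, and let ν : G → U(M_n(ℂ)) be a unitary representation. Suppose (p_g)_{g∈G} is a family of central projections in B (p_g = p_g* = p_g², and p_g commutes with every element of B) which are pairwise orthogonal (p_g p_h = 0 for g ≠ h), sum to 1 (∑_{g∈G} p_g = 1), and satisfy β_g(p_h) = p_{gh} for all g, h ∈ G. Then, given any unital star-algebra homomorphism Ψ : M_n(ℂ) → B, the map Ψ'(x) := ∑_{g∈G} p_g · β_g(Ψ(ν_{g}* x ν_{g})) is a unital star-algebra homomorphism from M_n(ℂ) to B which is equivariant, i.e. β_h(Ψ'(x)) = Ψ'(ν_h x ν_h*) for all h ∈ G and x ∈ M_n(ℂ). -/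
/-!
The central projections `p_g` split `B` into the blocks `p_g B`, and a family of unital
star-homomorphisms into the blocks glues to a unital star-homomorphism `x ↦ ∑_g p_g φ_g(x)`
because the blocks annihilate each other. Here `φ_g = β_g ∘ Ψ ∘ Ad(ν_g)⁻¹`, so that
`β_h ∘ φ_g = φ_{hg} ∘ Ad(ν_h)`; since `β_h` moves block `g` to block `hg`, applying `β_h` to the
glued map only reindexes the sum by `g ↦ hg`.
-/

theorem OrthogonalIdempotents.sum_mul_mul_sum_mul_of_commute {ι B : Type*} [Fintype ι]
    [Semiring B] {p : ι → B} (hp : OrthogonalIdempotents p)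
    (hcomm : ∀ i b, Commute (p i) b) (a b : ι → B) :
    (∑ i, p i * a i) * (∑ j, p j * b j) = ∑ i, p i * (a i * b i) := by
  classical
  have hterm : ∀ i j, p i * a i * (p j * b j) = (p i * p j) * (a i * b j) := fun i j => by
    rw [mul_assoc, ← mul_assoc (a i), ← (hcomm j (a i)).eq, mul_assoc, mul_assoc]
  simp only [Finset.sum_mul_sum, hterm, hp.mul_eq, ite_mul, zero_mul, Finset.sum_ite_eq,
    Finset.mem_univ, if_true]

def StarAlgHom.sumCentralProjections {ι R A B : Type*} [Fintype ι] [CommSemiring R]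
    [Semiring A] [Algebra R A] [Star A] [Semiring B] [Algebra R B] [StarRing B]
    {p : ι → B} (hp : CompleteOrthogonalIdempotents p)
    (hself : ∀ i, IsSelfAdjoint (p i)) (hcomm : ∀ i b, Commute (p i) b)
    (φ : ι → A →⋆ₐ[R] B) : A →⋆ₐ[R] B where
  toFun x := ∑ i, p i * φ i x
  map_one' := by simpa only [map_one, mul_one] using hp.complete
  map_mul' x y := by
    simp only [map_mul]
    exact (hp.toOrthogonalIdempotents.sum_mul_mul_sum_mul_of_commute hcomm _ _).symm
  map_zero' := by simp only [map_zero, mul_zero, Finset.sum_const_zero]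
  map_add' x y := by simp only [map_add, mul_add, Finset.sum_add_distrib]
  commutes' r := by
    simp only [AlgHomClass.commutes, ← Finset.sum_mul, hp.complete, one_mul]
  map_star' x := by
    simp only [star_sum, star_mul, map_star, (hself _).star_eq, (hcomm _ _).eq]

theorem map_sum_mul_eq_sum_mul_of_reindex {ι A B : Type*} [Fintype ι] [Semiring B]
    (p : ι → B) (φ : ι → A → B) (β : B →+* B) (α : A → A) (σ : ι ≃ ι)
    (hp : ∀ i, β (p i) = p (σ i)) (hφ : ∀ i x, β (φ i x) = φ (σ i) (α x)) (x : A) :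
    β (∑ i, p i * φ i x) = ∑ i, p i * φ i (α x) := by
  simp only [map_sum, map_mul, hp, hφ]
  exact σ.sum_comp fun i => p i * φ i (α x)

theorem averaged_starAlgHom_is_equivariant_general
    {G : Type*} [Group G] [Fintype G]
    {B : Type*} [CStarAlgebra B]
    (β : G →* (B ≃ₐ[ℂ] B)) (hβstar : ∀ (g : G) (b : B), β g (star b) = star (β g b))
    {n : ℕ} (ν : G →* Matrix.unitaryGroup (Fin n) ℂ)
    (p : G → B)
    (hself : ∀ g, star (p g) = p g)
    (hcentral : ∀ g (b : B), p g * b = b * p g)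
    (horth : ∀ g h, g ≠ h → p g * p h = 0)
    (hsum : ∑ g, p g = 1)
    (hperm : ∀ g h, β g (p h) = p (g * h))
    (Ψ : Matrix (Fin n) (Fin n) ℂ →⋆ₐ[ℂ] B) :
    ∃ Ψ' : Matrix (Fin n) (Fin n) ℂ →⋆ₐ[ℂ] B,
      (∀ x : Matrix (Fin n) (Fin n) ℂ,
        Ψ' x = ∑ g, p g *
          β g (Ψ (star (ν g : Matrix (Fin n) (Fin n) ℂ) * x * (ν g : Matrix (Fin n) (Fin n) ℂ)))) ∧
      (∀ (h : G) (x : Matrix (Fin n) (Fin n) ℂ),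
        β h (Ψ' x)
          = Ψ' ((ν h : Matrix (Fin n) (Fin n) ℂ) * x * star (ν h : Matrix (Fin n) (Fin n) ℂ))) := by
  let α : G →* (Matrix (Fin n) (Fin n) ℂ ≃⋆ₐ[ℂ] Matrix (Fin n) (Fin n) ℂ) :=
    (Unitary.conjStarAlgAut ℂ _).comp ν
  let φ : G → Matrix (Fin n) (Fin n) ℂ →⋆ₐ[ℂ] B := fun g =>
    ((StarAlgEquiv.ofAlgEquiv (β g) (hβstar g) : B →⋆ₐ[ℂ] B).comp Ψ).comp (α g).symm
  have hp : CompleteOrthogonalIdempotents p :=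
    CompleteOrthogonalIdempotents.iff_ortho_complete.mpr ⟨horth, hsum⟩
  have hφ : ∀ h g x, β h (φ g x) = φ (h * g) (α h x) := fun h g x => by
    have hconj : (α (h * g)).symm (α h x) = (α g).symm x := by
      rw [StarAlgEquiv.symm_apply_eq, map_mul, StarAlgEquiv.mul_apply,
        StarAlgEquiv.apply_symm_apply]
    show β h (β g (Ψ ((α g).symm x))) = β (h * g) (Ψ ((α (h * g)).symm (α h x)))
    rw [hconj, map_mul, AlgEquiv.mul_apply]
  refine ⟨StarAlgHom.sumCentralProjections hp hself hcentral φ, fun x => rfl, fun h x => ?_⟩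
  exact map_sum_mul_eq_sum_mul_of_reindex p (fun g => φ g) (β h : B →+* B) (α h)
    (Equiv.mulLeft h) (hperm h) (hφ h) x

/-- Let `G` be a finite group acting by star-algebra automorphisms `β`
on a unital C*-algebra `B`, let `ν : G → U(Mₙ(ℂ))` be a unitary representation, and let
`(p_g)_{g∈G}` be pairwise orthogonal central projections in `B` summing to `1` with
`β_g(p_h) = p_{gh}`.  Then for any unital star-algebra homomorphism `Ψ : Mₙ(ℂ) → B`, the
averaged map `Ψ'(x) = ∑_g p_g · β_g(Ψ(ν_g* x ν_g))` is a unital star-algebra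
homomorphism which is equivariant: `β_h(Ψ'(x)) = Ψ'(ν_h x ν_h*)`. -/
theorem averaged_starAlgHom_is_equivariant
    {G : Type*} [Group G] [Fintype G]
    {B : Type*} [CStarAlgebra B]
    (β : G →* (B ≃ₐ[ℂ] B)) (hβstar : ∀ (g : G) (b : B), β g (star b) = star (β g b))
    {n : ℕ} (hn : 1 ≤ n) (ν : G →* Matrix.unitaryGroup (Fin n) ℂ)
    (p : G → B)
    (hself : ∀ g, star (p g) = p g)
    (hidem : ∀ g, p g * p g = p g)
    (hcentral : ∀ g (b : B), p g * b = b * p g)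
    (horth : ∀ g h, g ≠ h → p g * p h = 0)
    (hsum : ∑ g, p g = 1)
    (hperm : ∀ g h, β g (p h) = p (g * h))
    (Ψ : Matrix (Fin n) (Fin n) ℂ →⋆ₐ[ℂ] B) :
    ∃ Ψ' : Matrix (Fin n) (Fin n) ℂ →⋆ₐ[ℂ] B,
      (∀ x : Matrix (Fin n) (Fin n) ℂ,
        Ψ' x = ∑ g, p g *
          β g (Ψ (star (ν g : Matrix (Fin n) (Fin n) ℂ) * x * (ν g : Matrix (Fin n) (Fin n) ℂ)))) ∧
      (∀ (h : G) (x : Matrix (Fin n) (Fin n) ℂ),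
        β h (Ψ' x)
          = Ψ' ((ν h : Matrix (Fin n) (Fin n) ℂ) * x * star (ν h : Matrix (Fin n) (Fin n) ℂ))) :=
  averaged_starAlgHom_is_equivariant_general β hβstar ν p hself hcentral horth hsum hperm Ψ
end
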